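/- Let R ⊆ List (ℕ × Bool) be a recursively enumerable set of words and let A ⊆ ℕ be recursively enumerable. Then the set of words {w ∈ List (ℕ × Bool) | the element of PresentedGroup (FreeGroup.mk '' R) represented by w lies in tor^A(PresentedGroup (FreeGroup.mk '' R))} is recursively enumerable. -/

import Mathlib

/-- The `X`-torsion of a group `G`: elements `g` with `g ^ n = 1` for some `n ∈ X`. -/
def xTorsion (X : Set ℕ) (G : Type*) [Group G] : Set G := {g | ∃ n ∈ X, g ^ n = 1}

/-- A group is `X`-torsion-free if its `X`-torsion consists only of the identity. -/
def IsXTorsionFree (X : Set ℕ) (G : Type*) [Group G] : Prop := xTorsion X G = {1}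

/-- The set of orders (≥ 2) of torsion elements of `G`. -/
def torord (G : Type*) [Group G] : Set ℕ := {n | 2 ≤ n ∧ ∃ g : G, orderOf g = n}

/-- One step of the `X`-torsion annihilation: the normal closure of the set of elements
whose image in `G ⧸ N` is `X`-torsion (i.e. `g ^ n ∈ N` for some `n ∈ X`). -/
def torStep (X : Set ℕ) {G : Type*} [Group G] (N : Subgroup G) : Subgroup G :=
  Subgroup.normalClosure {g : G | ∃ n ∈ X, g ^ n ∈ N}

/-- `torX X G n` is `tor^X_n(G)`. -/
def torX (X : Set ℕ) (G : Type*) [Group G] : ℕ → Subgroup G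
  | 0 => ⊥
  | n + 1 => torStep X (torX X G n)

lemma torStep_mono (X : Set ℕ) {G : Type*} [Group G] {N M : Subgroup G} (h : N ≤ M) :
    torStep X N ≤ torStep X M :=
  Subgroup.normalClosure_mono (fun g hg => by
    obtain ⟨n, hn, hgn⟩ := hg; exact ⟨n, hn, h hgn⟩)

lemma torX_le_succ (X : Set ℕ) (G : Type*) [Group G] (n : ℕ) :
    torX X G n ≤ torX X G (n + 1) := by
  induction n with
  | zero => exact bot_le
  | succ n ih => exact torStep_mono X ih

lemma torX_mono (X : Set ℕ) (G : Type*) [Group G] : Monotone (torX X G) :=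
  monotone_nat_of_le_succ (torX_le_succ X G)

/-- `tor^X_ω(G) = ⋃_n tor^X_n(G)`, as a subgroup of `G`. -/
def torOmega (X : Set ℕ) (G : Type*) [Group G] : Subgroup G where
  carrier := ⋃ n, (torX X G n : Set G)
  one_mem' := Set.mem_iUnion.mpr ⟨0, Subgroup.one_mem _⟩
  mul_mem' := by
    intro a b ha hb
    obtain ⟨m, hm⟩ := Set.mem_iUnion.mp ha
    obtain ⟨n, hn⟩ := Set.mem_iUnion.mp hb
    exact Set.mem_iUnion.mpr ⟨max m n, Subgroup.mul_mem _
      (torX_mono X G (le_max_left m n) hm) (torX_mono X G (le_max_right m n) hn)⟩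
  inv_mem' := by
    intro a ha
    obtain ⟨m, hm⟩ := Set.mem_iUnion.mp ha
    exact Set.mem_iUnion.mpr ⟨m, Subgroup.inv_mem _ hm⟩

instance torX_normal (X : Set ℕ) (G : Type*) [Group G] (n : ℕ) : (torX X G n).Normal := by
  cases n with
  | zero => exact inferInstanceAs (⊥ : Subgroup G).Normal
  | succ n => exact inferInstanceAs (Subgroup.normalClosure _).Normal

instance torOmega_normal (X : Set ℕ) (G : Type*) [Group G] : (torOmega X G).Normal := by
  constructor
  intro a ha g
  obtain ⟨m, hm⟩ := Set.mem_iUnion.mp ha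
  exact Set.mem_iUnion.mpr ⟨m, (torX_normal X G m).conj_mem a hm g⟩

/-- A predicate on a primcodable type is recursively enumerable if it is the domain of a
partial computable function. -/
def REPredicate {α : Type*} [Primcodable α] (p : α → Prop) : Prop :=
  Partrec (fun a => Part.assert (p a) (fun _ => Part.some ()))

/-- A group is finitely presented if it is isomorphic to the group of a finite presentation. -/
def IsFinitelyPresented (G : Type*) [Group G] : Prop :=
  ∃ (n : ℕ) (rels : Set (FreeGroup (Fin n))), rels.Finite ∧ Nonempty (G ≃* PresentedGroup rels)

/-!
The word `w` represents an element of `tor^A` iff `wⁿ` lies in the normal closure of the relators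
for some `n ∈ A`, i.e. iff `wⁿ` equals in the free group a product of conjugates `u r^{±1} u⁻¹` of
relators `r ∈ R`. The pair `(n, L)` with `L` listing these conjugates is a finite certificate:
checking it amounts to `n ∈ A` and `r ∈ R` for the listed relators, which are r.e. conditions, and
an equality of free reductions, which is primitive recursive. R.e. predicates are closed under
conjunction, quantification over the members of a list and existential projection, so the words
admitting a certificate form an r.e. set.
-/

section Computability

open Nat.Partrec.Code

variable {α β γ : Type*} [Primcodable α] [Primcodable β] [Primcodable γ]

theorem Primrec.list_replicate : Primrec₂ (List.replicate : ℕ → β → List β) :=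
  (Primrec.list_map (Primrec.list_range.comp Primrec.fst) (Primrec.snd.comp Primrec.fst).to₂).to₂
    |>.of_eq fun n b => by rw [List.map_const', List.length_range]

theorem REPred.comp {p : β → Prop} (hp : REPred p) {f : α → β} (hf : Computable f) :
    REPred fun a => p (f a) :=
  Partrec.comp hp hf

theorem REPred.and {p q : α → Prop} (hp : REPred p) (hq : REPred q) :
    REPred fun a => p a ∧ q a :=
  (Partrec.bind hp (Partrec.comp hq Computable.fst).to₂).of_eq fun _ => Part.ext fun _ => by simp

theorem PrimrecRel.exists_re {q : α → γ → Prop} (hq : PrimrecRel q) :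
    REPred fun a => ∃ c, q a c := by
  classical
  have hf : Primrec₂ fun a m =>
      (Encodable.decode (α := γ) m).bind fun c => if q a c then some c else none :=
    Primrec.option_bind (Primrec.decode.comp Primrec.snd) <| Primrec.ite
      (hq.comp (Primrec.fst.comp Primrec.fst) Primrec.snd) (Primrec.option_some.comp Primrec.snd)
      (Primrec.const none)
  refine (Partrec.rfindOpt hf.to_comp).dom_re.of_eq fun a => ?_
  rw [Nat.rfindOpt_dom]
  constructor
  · rintro ⟨m, c, hc⟩
    simp only [Option.mem_def, Option.bind_eq_some_iff, Option.ite_none_right_eq_some] at hc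
    obtain ⟨c, -, hqc, -⟩ := hc
    exact ⟨c, hqc⟩
  · rintro ⟨c, hc⟩
    exact ⟨Encodable.encode c, c, by simp [hc]⟩

/-- Kleene normal form: `q a k` says that a program computing `p` halts on `a` within `k` steps. -/
theorem REPred.exists_primrecRel {p : α → Prop} (hp : REPred p) :
    ∃ q : α → ℕ → Prop, PrimrecRel q ∧ ∀ a, p a ↔ ∃ k, q a k := by
  obtain ⟨c, hc⟩ := exists_code.1 hp
  refine ⟨fun a k => (evaln k c (Encodable.encode a)).isSome, ?_, fun a => ?_⟩
  · exact Primrec.primrecPred <| Primrec.eq.decide.comp (Primrec.option_isSome.comp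
      (primrec_evaln.comp ((Primrec.snd.pair (Primrec.const c)).pair
        (Primrec.encode.comp Primrec.fst)))) (Primrec.const true)
  · have hdom : p a ↔ (eval c (Encodable.encode a)).Dom := by
      simp [hc, Encodable.encodek, Part.assert]
    simp only [hdom, Part.dom_iff_mem, evaln_complete, Option.isSome_iff_exists, Option.mem_def]
    exact exists_comm

theorem REPred.exists {p : α → β → Prop} (hp : REPred fun x : α × β => p x.1 x.2) :
    REPred fun a => ∃ b, p a b := by
  obtain ⟨q, hq, hpq⟩ := hp.exists_primrecRel
  refine (PrimrecRel.exists_re (q := fun a (y : β × ℕ) => q (a, y.1) y.2) ?_).of_eq fun a => ?_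
  · exact hq.comp (Primrec.fst.pair (Primrec.fst.comp Primrec.snd)) (Primrec.snd.comp Primrec.snd)
  · simp only [Prod.exists]
    exact exists_congr fun b => (hpq (a, b)).symm

theorem REPred.forall_mem_list {p : α → Prop} (hp : REPred p) :
    REPred fun l : List α => ∀ a ∈ l, p a := by
  obtain ⟨q, hq, hpq⟩ := hp.exists_primrecRel
  -- `∀ a ∈ l, ∃ k, q a k` has a single witness: the list pairing each `a` with its `k`.
  have hwit : PrimrecRel fun (l : List α) (l' : List (α × ℕ)) =>
      l'.map Prod.fst = l ∧ ∀ y ∈ l', q y.1 y.2 :=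
    (Primrec.eq.comp (Primrec.list_map Primrec.snd (Primrec.fst.comp Primrec.snd).to₂)
      Primrec.fst).and
      ((hq.comp Primrec.fst Primrec.snd).forall_mem_list.comp Primrec.snd)
  refine hwit.exists_re.of_eq fun l => ⟨?_, ?_⟩
  · rintro ⟨l', rfl, hl'⟩ a ha
    obtain ⟨y, hy, rfl⟩ := List.mem_map.1 ha
    exact (hpq _).2 ⟨y.2, hl' y hy⟩
  · induction l with
    | nil => exact fun _ => ⟨[], rfl, by simp⟩
    | cons a l ih =>
      intro hl
      obtain ⟨k, hk⟩ := (hpq a).1 (hl a List.mem_cons_self)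
      obtain ⟨l', rfl, hl'⟩ := ih fun b hb => hl b (List.mem_cons_of_mem a hb)
      exact ⟨(a, k) :: l', rfl, List.forall_mem_cons.2 ⟨hk, hl'⟩⟩

end Computability

section NormalClosure

variable {G : Type*} [Group G]

def signedConj (t : G × G × Bool) : G :=
  t.2.1 * (bif t.2.2 then t.1 else t.1⁻¹) * t.2.1⁻¹

theorem signedConj_not (s g : G) (b : Bool) :
    signedConj (s, g, !b) = (signedConj (s, g, b))⁻¹ := by
  cases b <;> simp [signedConj, mul_assoc]

theorem signedConj_mem_normalClosure {S : Set G} {t : G × G × Bool} (ht : t.1 ∈ S) :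
    signedConj t ∈ Subgroup.normalClosure S := by
  have hs := Subgroup.subset_normalClosure ht
  refine Subgroup.normalClosure_normal.conj_mem _ ?_ _
  cases t.2.2
  exacts [Subgroup.inv_mem _ hs, hs]

theorem Subgroup.mem_normalClosure_iff_exists_list {S : Set G} {x : G} :
    x ∈ normalClosure S ↔
      ∃ l : List (G × G × Bool), (∀ t ∈ l, t.1 ∈ S) ∧ (l.map signedConj).prod = x := by
  refine ⟨fun hx => ?_, ?_⟩
  · induction hx using Subgroup.closure_induction with
    | mem y hy =>
      obtain ⟨s, hs, hconj⟩ := Group.mem_conjugatesOfSet_iff.1 hy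
      obtain ⟨g, rfl⟩ := isConj_iff.1 hconj
      exact ⟨[(s, g, true)], by simpa using hs, by simp [signedConj]⟩
    | one => exact ⟨[], by simp, rfl⟩
    | mul y z _ _ hy hz =>
      obtain ⟨l₁, h₁, rfl⟩ := hy
      obtain ⟨l₂, h₂, rfl⟩ := hz
      refine ⟨l₁ ++ l₂, fun t ht => ?_, by simp⟩
      exact (List.mem_append.1 ht).elim (h₁ t) (h₂ t)
    | inv y _ hy =>
      obtain ⟨l, hl, rfl⟩ := hy
      refine ⟨(l.map fun t => (t.1, t.2.1, !t.2.2)).reverse,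
        fun t ht => ?_, ?_⟩
      · obtain ⟨s, hs, rfl⟩ := List.mem_map.1 (List.mem_reverse.1 ht)
        exact hl s hs
      · simp only [List.prod_inv_reverse, List.map_reverse, List.map_map]
        congr 3
        funext ⟨s, g, b⟩
        exact signedConj_not s g b
  · rintro ⟨l, hl, rfl⟩
    exact list_prod_mem fun y hy => by
      obtain ⟨t, ht, rfl⟩ := List.mem_map.1 hy
      exact signedConj_mem_normalClosure (hl t ht)

end NormalClosure

theorem QuotientGroup.mk_mem_xTorsion_iff {G : Type*} [Group G] {N : Subgroup G} [N.Normal]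
    {A : Set ℕ} {x : G} : (x : G ⧸ N) ∈ xTorsion A (G ⧸ N) ↔ ∃ n ∈ A, x ^ n ∈ N := by
  simp only [xTorsion, Set.mem_ofPred_eq, ← QuotientGroup.mk_pow, QuotientGroup.eq_one_iff]

namespace FreeGroup

variable {α : Type*}

theorem mk_flatten (l : List (List (α × Bool))) : mk l.flatten = (l.map mk).prod := by
  induction l with
  | nil => rfl
  | cons w l ih => rw [List.flatten_cons, ← mul_mk, ih, List.map_cons, List.prod_cons]

theorem mk_eq_mk_iff_reduce_eq [DecidableEq α] {u v : List (α × Bool)} :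
    mk u = mk v ↔ reduce u = reduce v := by
  rw [← toWord_inj, toWord_mk, toWord_mk]

def conjWord (t : List (α × Bool) × List (α × Bool) × Bool) : List (α × Bool) :=
  t.2.1 ++ (bif t.2.2 then t.1 else invRev t.1) ++ invRev t.2.1

theorem mk_conjWord (t : List (α × Bool) × List (α × Bool) × Bool) :
    mk (conjWord t) = signedConj (mk t.1, mk t.2.1, t.2.2) := by
  cases h : t.2.2 <;> simp [conjWord, signedConj, h, ← mul_mk, inv_mk, mul_assoc]

theorem mk_mem_normalClosure_iff [DecidableEq α] {R : Set (List (α × Bool))}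
    {w : List (α × Bool)} :
    mk w ∈ Subgroup.normalClosure (mk '' R) ↔
      ∃ L : List (List (α × Bool) × List (α × Bool) × Bool),
        (∀ t ∈ L, t.1 ∈ R) ∧ reduce (L.map conjWord).flatten = reduce w := by
  simp only [Subgroup.mem_normalClosure_iff_exists_list, ← mk_eq_mk_iff_reduce_eq, mk_flatten,
    List.map_map]
  constructor
  · rintro ⟨l, hl, hprod⟩
    refine ⟨l.map fun t => (Function.invFunOn mk R t.1, t.2.1.toWord, t.2.2), ?_, ?_⟩
    · exact List.forall_mem_map.2 fun t ht => Function.invFunOn_mem (hl t ht)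
    · rw [← hprod, List.map_map]
      refine congrArg List.prod (List.map_congr_left fun t ht => ?_)
      simp [mk_conjWord, Function.invFunOn_eq (hl t ht), mk_toWord]
  · rintro ⟨L, hL, hprod⟩
    refine ⟨L.map fun t => (mk t.1, mk t.2.1, t.2.2), ?_, ?_⟩
    · exact List.forall_mem_map.2 fun t ht => Set.mem_image_of_mem mk (hL t ht)
    · simp [← hprod, Function.comp_def, mk_conjWord]


theorem primrec_invRev [Primcodable α] : Primrec (invRev : List (α × Bool) → List (α × Bool)) :=
  Primrec.list_reverse.comp <| Primrec.list_map Primrec.id <|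
    (Primrec.fst.comp Primrec.snd).pair (Primrec.not.comp (Primrec.snd.comp Primrec.snd))

theorem primrec_conjWord [Primcodable α] :
    Primrec (conjWord : List (α × Bool) × List (α × Bool) × Bool → _) :=
  Primrec.list_append.comp
    (Primrec.list_append.comp (Primrec.fst.comp Primrec.snd)
      (Primrec.cond (Primrec.snd.comp Primrec.snd) Primrec.fst (primrec_invRev.comp Primrec.fst)))
    (primrec_invRev.comp (Primrec.fst.comp Primrec.snd))

open Primrec in
theorem primrec_reduce [Primcodable α] [DecidableEq α] :
    Primrec (reduce : List (α × Bool) → List (α × Bool)) := by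
  have hstep : Primrec₂ fun (x : α × Bool) (l : List (α × Bool)) =>
      (List.casesOn l [x] fun hd tl =>
        if x.1 = hd.1 ∧ x.2 = !hd.2 then tl else x :: hd :: tl : List (α × Bool)) :=
    list_casesOn snd (list_cons.comp fst (const []))
      (Primrec.ite
        ((Primrec.eq.comp (fst.comp (fst.comp fst)) (fst.comp (fst.comp snd))).and
          (Primrec.eq.comp (snd.comp (fst.comp fst)) (Primrec.not.comp (snd.comp (fst.comp snd)))))
        (snd.comp snd)
        (list_cons.comp (fst.comp fst) (list_cons.comp (fst.comp snd) (snd.comp snd)))).to₂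
  refine (list_foldr Primrec.id (const []) (hstep.comp (fst.comp snd) (snd.comp snd)).to₂).of_eq
    fun L => ?_
  dsimp only [id]
  induction L with
  | nil => rfl
  | cons x L ih => rw [List.foldr_cons, ih, reduce.cons]

end FreeGroup

section TorsionCertificate

variable {α : Type*} [DecidableEq α]

/-- `(n, L)` certifies that `w` represents an `A`-torsion element: `n ∈ A` and `wⁿ` is, in the
free group, the product of the conjugates of relators encoded by `L` (see `conjWord`). -/
def TorsionCertificate (R : Set (List (α × Bool))) (A : Set ℕ) (w : List (α × Bool))
    (c : ℕ × List (List (α × Bool) × List (α × Bool) × Bool)) : Prop :=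
  c.1 ∈ A ∧ (∀ t ∈ c.2, t.1 ∈ R) ∧
    FreeGroup.reduce (c.2.map FreeGroup.conjWord).flatten =
      FreeGroup.reduce (List.replicate c.1 w).flatten

theorem PresentedGroup.mk_mem_xTorsion_iff_exists_torsionCertificate
    {R : Set (List (α × Bool))} {A : Set ℕ} {w : List (α × Bool)} :
    PresentedGroup.mk (FreeGroup.mk '' R) (FreeGroup.mk w) ∈
        xTorsion A (PresentedGroup (FreeGroup.mk '' R)) ↔
      ∃ c, TorsionCertificate R A w c := by
  refine QuotientGroup.mk_mem_xTorsion_iff.trans ?_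
  simp only [FreeGroup.pow_mk, FreeGroup.mk_mem_normalClosure_iff, TorsionCertificate,
    Prod.exists, exists_and_left]

theorem REPred.torsionCertificate [Primcodable α] {R : Set (List (α × Bool))}
    {A : Set ℕ} (hR : REPred (· ∈ R)) (hA : REPred (· ∈ A)) :
    REPred fun x : List (α × Bool) × ℕ × List (List (α × Bool) × List (α × Bool) × Bool) =>
      TorsionCertificate R A x.1 x.2 := by
  refine (hA.comp (Computable.fst.comp Computable.snd)).and
    (((hR.comp Computable.fst).forall_mem_list.comp (Computable.snd.comp Computable.snd)).and
      (PrimrecPred.computablePred ?_).to_re)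
  exact Primrec.eq.comp
    (FreeGroup.primrec_reduce.comp (Primrec.list_flatten.comp
      (Primrec.list_map (Primrec.snd.comp Primrec.snd)
        (FreeGroup.primrec_conjWord.comp Primrec.snd).to₂)))
    (FreeGroup.primrec_reduce.comp (Primrec.list_flatten.comp
      (Primrec.list_replicate.comp (Primrec.fst.comp Primrec.snd) Primrec.fst)))

end TorsionCertificate

theorem xTorsion_words_re (R : Set (List (ℕ × Bool))) (hR : REPredicate (· ∈ R))
    (A : Set ℕ) (hA : REPredicate (· ∈ A)) :
    REPredicate (fun w : List (ℕ × Bool) =>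
      PresentedGroup.mk (FreeGroup.mk '' R) (FreeGroup.mk w) ∈
        xTorsion A (PresentedGroup (FreeGroup.mk '' R))) :=
  (REPred.torsionCertificate hR hA).exists.of_eq fun _ =>
    PresentedGroup.mk_mem_xTorsion_iff_exists_torsionCertificate.symm
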